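/- The first-order part of P is a maximum among first-order problems Weihrauch-below P: for every problem P, ¹P is Weihrauch equivalent to the ≤_W-maximum of the set of first-order problems Q with Q ≤_W P. -/

import Mathlib

open Classical

/-- A Turing functional, presented by a monotone computable map on finite prefixes
of the oracle. -/
structure Functional where
  eval : List ℕ → ℕ → Option ℕ
  mono : ∀ σ τ x y, σ <+: τ → eval σ x = some y → eval τ x = some y
  comp : Computable₂ eval

/-- The finite initial segment of `f` of length `k`. -/
def initSeg (f : ℕ → ℕ) (k : ℕ) : List ℕ := (List.range k).map f

/-- `Φ(f)(x)` converges with value `y`. -/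
def Functional.conv (Φ : Functional) (f : ℕ → ℕ) (x y : ℕ) : Prop :=
  ∃ k, Φ.eval (initSeg f k) x = some y

/-- Total application: `Φ(f) = g`. -/
def Functional.Total (Φ : Functional) (f g : ℕ → ℕ) : Prop :=
  ∀ x, Φ.conv f x (g x)

/-- The Turing join of two elements of Baire space. -/
def join (f g : ℕ → ℕ) : ℕ → ℕ := fun n => if n % 2 = 0 then f (n / 2) else g (n / 2)

/-- The embedding of `ℕ` into Baire space: `n` is identified with `n,0,0,0,…`. -/
def natSeq (n : ℕ) : ℕ → ℕ := fun i => if i = 0 then n else 0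

/-- A problem: a partial multifunction on Baire space, given by its domain
(the set of instances) and, for each instance, its set of solutions. -/
structure Problem where
  dom : Set (ℕ → ℕ)
  sol : (ℕ → ℕ) → Set (ℕ → ℕ)

/-- Weihrauch reducibility `Q ≤_W P`. -/
def WRed (Q P : Problem) : Prop :=
  ∃ Φ Ψ : Functional, ∀ f ∈ Q.dom, ∃ h, Φ.Total f h ∧ h ∈ P.dom ∧
    ∀ g ∈ P.sol h, ∃ y, Ψ.Total (join f g) y ∧ y ∈ Q.sol f

/-- Strong Weihrauch reducibility `Q ≤_sW P`: the backward functional only sees the solution. -/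
def SRed (Q P : Problem) : Prop :=
  ∃ Φ Ψ : Functional, ∀ f ∈ Q.dom, ∃ h, Φ.Total f h ∧ h ∈ P.dom ∧
    ∀ g ∈ P.sol h, ∃ y, Ψ.Total g y ∧ y ∈ Q.sol f

/-- Weihrauch equivalence. -/
def WEquiv (Q P : Problem) : Prop := WRed Q P ∧ WRed P Q

/-- Strong Weihrauch equivalence. -/
def SEquiv (Q P : Problem) : Prop := SRed Q P ∧ SRed P Q

/-- A problem is first-order if all its solutions are natural numbers
(under the identification of `n` with `natSeq n`). -/
def FirstOrder (P : Problem) : Prop :=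
  ∀ f ∈ P.dom, ∀ g ∈ P.sol f, ∃ n, g = natSeq n

/-- The code of a functional as an element of Baire space (the graph of its
prefix-evaluation function). -/
def Functional.graph (Φ : Functional) : ℕ → ℕ :=
  fun n => Encodable.encode (Φ.eval (Denumerable.ofNat (List ℕ) n.unpair.1) n.unpair.2)

/-- The first-order part `¹P` of a problem `P`: instances are (codes of) triples
`⟨f,Φ,Ψ⟩` with `Φ(f) ∈ dom(P)` and `Ψ(f,g)(0)↓` for all `g ∈ P(Φ(f))`; the
solutions are all values `Ψ(f,g)(0)` for `g ∈ P(Φ(f))`. -/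
def FOPart (P : Problem) : Problem where
  dom := { h | ∃ (f : ℕ → ℕ) (Φ Ψ : Functional), h = join f (join Φ.graph Ψ.graph) ∧
    ∃ p, Φ.Total f p ∧ p ∈ P.dom ∧ ∀ g ∈ P.sol p, ∃ y, Ψ.conv (join f g) 0 y }
  sol h := { w | ∃ (f : ℕ → ℕ) (Φ Ψ : Functional) (p g : ℕ → ℕ) (y : ℕ),
    h = join f (join Φ.graph Ψ.graph) ∧ Φ.Total f p ∧ p ∈ P.dom ∧ g ∈ P.sol p ∧
    Ψ.conv (join f g) 0 y ∧ w = natSeq y }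

/-- `P` is computably true: every instance computes one of its solutions. -/
def ComputablyTrue (P : Problem) : Prop :=
  ∀ f ∈ P.dom, ∃ g ∈ P.sol f, ∃ Φ : Functional, Φ.Total f g

/-- `P` is uniformly computably true: a single functional solves every instance. -/
def UnifCompTrue (P : Problem) : Prop :=
  ∃ Φ : Functional, ∀ f ∈ P.dom, ∃ g, Φ.Total f g ∧ g ∈ P.sol f

/-- `σ` is a finite initial segment of some `P`-solution to `f`. -/
def Extendible (P : Problem) (f : ℕ → ℕ) (σ : List ℕ) : Prop :=
  ∃ g ∈ P.sol f, σ = initSeg g σ.length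

/-- `P` is undiagonalizable: the set of strings extendible to a solution is
uniformly decidable from the instance. -/
def Undiag (P : Problem) : Prop :=
  ∃ Γ : Functional, ∀ f ∈ P.dom, ∀ σ : List ℕ,
    (Extendible P f σ → Γ.conv f (Encodable.encode σ) 1) ∧
    (¬ Extendible P f σ → Γ.conv f (Encodable.encode σ) 0)

/-! An instance of `¹P` carries the graphs of its functionals `Φ`, `Ψ` inside the oracle, so one
universal functional runs them: it reads `Φ(f)` off the instance, and `Ψ(join f g)(0)` off the
instance joined with a `P`-solution `g`. Conversely, if a first-order `Q` reduces to `P` via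
`(Φ, Ψ)`, then `f ↦ join f (join Φ.graph Ψ.graph)` is computable, because the graphs of functionals
are computable, and the `¹P`-solutions of this instance are the values `Ψ(join f g)(0)`; as `Q` is
first-order, these are exactly the `Q`-solutions that `Ψ` produces. -/

open Encodable

@[simp] lemma initSeg_length (f : ℕ → ℕ) (k : ℕ) : (initSeg f k).length = k := by
  simp [initSeg]

lemma initSeg_getElem? {f : ℕ → ℕ} {k i : ℕ} (h : i < k) : (initSeg f k)[i]? = some (f i) := by
  simp [initSeg, h]

lemma take_initSeg (f : ℕ → ℕ) {k n : ℕ} (h : k ≤ n) : (initSeg f n).take k = initSeg f k := by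
  rw [initSeg, ← List.map_take, List.take_range, Nat.min_eq_left h, initSeg]

lemma initSeg_prefix (f : ℕ → ℕ) {k n : ℕ} (h : k ≤ n) : initSeg f k <+: initSeg f n :=
  take_initSeg f h ▸ List.take_prefix _ _

lemma initSeg_congr {f g : ℕ → ℕ} {k : ℕ} (h : ∀ i < k, f i = g i) : initSeg f k = initSeg g k :=
  List.map_congr_left fun i hi => h i (List.mem_range.1 hi)

lemma List.IsPrefix.getElem?_eq_some {α : Type*} {l₁ l₂ : List α} (h : l₁ <+: l₂) {i : ℕ} {a : α}
    (hi : l₁[i]? = some a) : l₂[i]? = some a := by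
  obtain ⟨t, rfl⟩ := h
  rwa [List.getElem?_append_left (List.getElem?_eq_some_iff.1 hi).1]

lemma List.IsPrefix.getD_eq {α : Type*} {l₁ l₂ : List α} (h : l₁ <+: l₂) {i : ℕ}
    (hi : i < l₁.length) (d : α) : l₂.getD i d = l₁.getD i d := by
  obtain ⟨t, rfl⟩ := h
  exact List.getD_append _ _ _ _ hi

lemma List.IsPrefix.take_eq {α : Type*} {l₁ l₂ : List α} (h : l₁ <+: l₂) {k : ℕ}
    (hk : k ≤ l₁.length) : l₂.take k = l₁.take k := by
  rw [List.prefix_iff_eq_take.1 h, List.take_take, Nat.min_eq_left hk]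

@[simp] lemma join_two_mul (f g : ℕ → ℕ) (n : ℕ) : join f g (2 * n) = f n := by
  simp [join]

@[simp] lemma join_two_mul_add_one (f g : ℕ → ℕ) (n : ℕ) : join f g (2 * n + 1) = g n := by
  simp only [join]
  rw [if_neg (by omega), show (2 * n + 1) / 2 = n by omega]

lemma join_inj {f g f' g' : ℕ → ℕ} : join f g = join f' g' ↔ f = f' ∧ g = g' := by
  refine ⟨fun h => ⟨funext fun n => ?_, funext fun n => ?_⟩, fun ⟨hf, hg⟩ => hf ▸ hg ▸ rfl⟩
  · simpa using congrFun h (2 * n)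
  · simpa using congrFun h (2 * n + 1)

lemma comp_join (h f g : ℕ → ℕ) : h ∘ join f g = join (h ∘ f) (h ∘ g) := by
  funext n
  simp only [Function.comp, join]
  split_ifs <;> rfl

lemma primrec_even : PrimrecPred fun n : ℕ => n % 2 = 0 :=
  Primrec.eq.comp (Primrec.nat_mod.comp .id (.const 2)) (.const 0)

lemma primrec_join {f g : ℕ → ℕ} (hf : Primrec f) (hg : Primrec g) : Primrec (join f g) :=
  Primrec.ite primrec_even (hf.comp (Primrec.nat_div.comp .id (.const 2)))
    (hg.comp (Primrec.nat_div.comp .id (.const 2)))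

lemma computable_join {f g : ℕ → ℕ} (hf : Computable f) (hg : Computable g) :
    Computable (join f g) :=
  (Computable.cond primrec_even.decide.to_comp
    (hf.comp (Primrec.nat_div.comp .id (.const 2)).to_comp)
    (hg.comp (Primrec.nat_div.comp .id (.const 2)).to_comp)).of_eq fun n => by
    by_cases h : n % 2 = 0 <;> simp [join, h]

namespace Functional

lemma conv_unique {Φ : Functional} {f : ℕ → ℕ} {x y y' : ℕ}
    (h : Φ.conv f x y) (h' : Φ.conv f x y') : y = y' := by
  obtain ⟨k, hk⟩ := h
  obtain ⟨k', hk'⟩ := h'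
  have e := Φ.mono _ _ _ _ (initSeg_prefix f (le_max_left k k')) hk
  have e' := Φ.mono _ _ _ _ (initSeg_prefix f (le_max_right k k')) hk'
  exact Option.some_injective _ (e.symm.trans e')

lemma total_unique {Φ : Functional} {f p p' : ℕ → ℕ} (h : Φ.Total f p) (h' : Φ.Total f p') :
    p = p' :=
  funext fun x => conv_unique (h x) (h' x)

lemma graph_pair (Φ : Functional) (σ : List ℕ) (x : ℕ) :
    Φ.graph (Nat.pair (encode σ) x) = encode (Φ.eval σ x) := by
  simp [graph]

lemma graph_injective : Function.Injective Functional.graph := by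
  rintro ⟨e, _, _⟩ ⟨e', _, _⟩ h
  obtain rfl : e = e' := funext₂ fun σ x =>
    encode_injective (by simpa [graph_pair] using congrFun h (Nat.pair (encode σ) x))
  rfl

lemma graph_computable (Φ : Functional) : Computable Φ.graph :=
  Computable.encode.comp (Φ.comp.comp
    ((Computable.ofNat (List ℕ)).comp (Computable.fst.comp Computable.unpair))
    (Computable.snd.comp Computable.unpair))

end Functional

/-- The length of the longest initial segment of `h ∘ g` that a prefix `σ` of `h` determines. -/
def pullbackLength (g : ℕ → ℕ) (σ : List ℕ) : ℕ :=
  Nat.findGreatest (fun j => ∀ n < j, g n < σ.length) σ.length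

def pullback (g : ℕ → ℕ) (σ : List ℕ) : List ℕ :=
  initSeg (fun n => σ.getD (g n) 0) (pullbackLength g σ)

section Pullback

variable {g : ℕ → ℕ} {σ τ : List ℕ}

lemma lt_length_of_lt_pullbackLength {n : ℕ} (hn : n < pullbackLength g σ) :
    g n < σ.length :=
  Nat.findGreatest_spec (P := fun j => ∀ n < j, g n < σ.length) (Nat.zero_le _)
    (fun _ h => absurd h (Nat.not_lt_zero _)) n hn

lemma le_pullbackLength {c : ℕ} (hc : c ≤ σ.length) (hg : ∀ n < c, g n < σ.length) :
    c ≤ pullbackLength g σ :=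
  Nat.le_findGreatest hc hg

lemma pullback_prefix (h : σ <+: τ) : pullback g σ <+: pullback g τ := by
  have hlen := h.length_le
  have hle : pullbackLength g σ ≤ pullbackLength g τ :=
    le_pullbackLength ((Nat.findGreatest_le _).trans hlen)
      fun n hn => (lt_length_of_lt_pullbackLength hn).trans_le hlen
  rw [pullback, initSeg_congr fun n hn => (h.getD_eq (lt_length_of_lt_pullbackLength hn) 0).symm]
  exact initSeg_prefix _ hle

lemma pullback_initSeg (h : ℕ → ℕ) (K : ℕ) :
    pullback g (initSeg h K) = initSeg (h ∘ g) (pullbackLength g (initSeg h K)) := by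
  refine initSeg_congr fun n hn => ?_
  have := lt_length_of_lt_pullbackLength hn
  rw [initSeg_length] at this
  simp [List.getD_eq_getElem?_getD, initSeg_getElem? this]

lemma exists_le_pullbackLength (g : ℕ → ℕ) (c : ℕ) :
    ∃ K, ∀ σ : List ℕ, K ≤ σ.length → c ≤ pullbackLength g σ := by
  refine ⟨c + (Finset.range c).sup g + 1, fun σ hσ => le_pullbackLength (by omega) fun n hn => ?_⟩
  have := Finset.le_sup (f := g) (Finset.mem_range.2 hn)
  omega

lemma primrec_pullback (hg : Primrec g) : Primrec (pullback g) := by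
  have hlt : PrimrecRel fun (n : ℕ) (σ : List ℕ) => g n < σ.length :=
    Primrec.nat_lt.comp (hg.comp Primrec.fst) (Primrec.list_length.comp Primrec.snd)
  have hall : PrimrecRel fun (σ : List ℕ) (j : ℕ) => ∀ n < j, g n < σ.length :=
    (hlt.forall_mem_list.comp (Primrec.list_range.comp Primrec.snd) Primrec.fst).of_eq
      fun _ => by simp
  have hlen : Primrec (pullbackLength g) := Primrec.nat_findGreatest Primrec.list_length hall
  exact Primrec.list_map (Primrec.list_range.comp hlen)
    ((Primrec.list_getD 0).comp₂ Primrec₂.left (hg.comp₂ Primrec₂.right))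

end Pullback

/-- `none` if entry `n` lies beyond the finite prefix `γ` of a graph, otherwise the `Option ℕ`
that the entry encodes. -/
def readGraph (γ : List ℕ) (n : ℕ) : Option (Option ℕ) := γ[n]?.bind decode

def univQuery (φ : List ℕ) (x k : ℕ) : ℕ := Nat.pair (encode (φ.take k)) x

/-- The search over the stages `k ≤ φ.length` stops at the first entry that is convergent *or
unknown*: stopping only at convergent entries would not be monotone in `γ` on lists that are not
prefixes of a graph. -/
def univEval (γ φ : List ℕ) (x : ℕ) : Option ℕ :=
  ((List.range (φ.length + 1)).find? fun k =>
      decide (readGraph γ (univQuery φ x k) ≠ some none)).bind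
    fun k => (readGraph γ (univQuery φ x k)).join

lemma readGraph_mono {γ γ' : List ℕ} (h : γ <+: γ') {n : ℕ} {v : Option ℕ}
    (hv : readGraph γ n = some v) : readGraph γ' n = some v := by
  obtain ⟨e, he, hev⟩ := Option.bind_eq_some_iff.1 hv
  rw [readGraph, h.getElem?_eq_some he]
  exact hev

lemma readGraph_initSeg_graph (Φ : Functional) {N : ℕ} {σ : List ℕ} {x : ℕ}
    (h : Nat.pair (encode σ) x < N) :
    readGraph (initSeg Φ.graph N) (Nat.pair (encode σ) x) = some (Φ.eval σ x) := by
  simp [readGraph, initSeg_getElem? h, Φ.graph_pair]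

lemma univQuery_of_prefix {φ φ' : List ℕ} (h : φ <+: φ') {x k : ℕ} (hk : k ≤ φ.length) :
    univQuery φ' x k = univQuery φ x k := by
  rw [univQuery, univQuery, h.take_eq hk]

lemma univEval_eq_some_iff {γ φ : List ℕ} {x y : ℕ} :
    univEval γ φ x = some y ↔ ∃ k ≤ φ.length, readGraph γ (univQuery φ x k) = some (some y) ∧
      ∀ i < k, readGraph γ (univQuery φ x i) = some none := by
  simp only [univEval, Option.bind_eq_some_iff, List.find?_range_eq_some, Option.join_eq_some_iff,
    List.mem_range, Nat.lt_succ_iff, Bool.not_eq_true', decide_eq_false_iff_not, not_not]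
  constructor
  · rintro ⟨k, ⟨-, hk, hlt⟩, hy⟩
    exact ⟨k, hk, hy, hlt⟩
  · rintro ⟨k, hk, hy, hlt⟩
    exact ⟨k, ⟨by simp [hy], hk, hlt⟩, hy⟩

lemma univEval_mono {γ γ' φ φ' : List ℕ} (hγ : γ <+: γ') (hφ : φ <+: φ') {x y : ℕ}
    (h : univEval γ φ x = some y) : univEval γ' φ' x = some y := by
  obtain ⟨k, hk, hy, hlt⟩ := univEval_eq_some_iff.1 h
  refine univEval_eq_some_iff.2 ⟨k, hk.trans hφ.length_le, ?_, fun i hi => ?_⟩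
  · rw [univQuery_of_prefix hφ hk]
    exact readGraph_mono hγ hy
  · rw [univQuery_of_prefix hφ (hi.le.trans hk)]
    exact readGraph_mono hγ (hlt i hi)

lemma univEval_initSeg_graph {Φ : Functional} {f : ℕ → ℕ} {x y : ℕ} (h : Φ.conv f x y) :
    ∃ c, ∀ N n, c ≤ N → c ≤ n → univEval (initSeg Φ.graph N) (initSeg f n) x = some y := by
  have hex : ∃ k, Φ.eval (initSeg f k) x ≠ none := h.imp fun _ hk => by simp [hk]
  obtain ⟨y', hy'⟩ := Option.ne_none_iff_exists'.1 (Nat.find_spec hex)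
  obtain rfl : y' = y := Functional.conv_unique ⟨_, hy'⟩ h
  set j := Nat.find hex
  set M := (Finset.range (j + 1)).sup fun i => Nat.pair (encode (initSeg f i)) x
  refine ⟨j + M + 1, fun N n hN hn => ?_⟩
  have key : ∀ i ≤ j, readGraph (initSeg Φ.graph N) (univQuery (initSeg f n) x i) =
      some (Φ.eval (initSeg f i) x) := fun i hi => by
    have : Nat.pair (encode (initSeg f i)) x ≤ M :=
      Finset.le_sup (f := fun i => Nat.pair (encode (initSeg f i)) x) (by simp; omega)
    rw [univQuery, take_initSeg f (by omega), readGraph_initSeg_graph Φ (by omega)]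
  refine univEval_eq_some_iff.2 ⟨j, by simp; omega, by rw [key j le_rfl, hy'], fun i hi => ?_⟩
  rw [key i hi.le, not_not.1 (Nat.find_min hex hi)]

lemma primrec_list_find? {α β : Type*} [Primcodable α] [Primcodable β] {f : α → List β}
    {p : α → β → Bool} (hf : Primrec f) (hp : Primrec₂ p) :
    Primrec fun a => (f a).find? (p a) := by
  have hg : Primrec₂ fun a b => Option.guard (p a) b :=
    (Primrec.cond hp (Primrec.option_some.comp Primrec.snd) (Primrec.const none)).of_eq
      fun _ => by simp [Option.guard]
  exact (Primrec.list_head?.comp (Primrec.listFilterMap hf hg)).of_eq fun a => by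
    rw [List.head?_filterMap, ← List.find?_eq_findSome?_guard]

lemma primrec_readGraph : Primrec₂ readGraph :=
  Primrec.option_bind Primrec.list_getElem? (Primrec.decode.comp₂ Primrec₂.right)

lemma primrec_univEval : Primrec fun a : (List ℕ × List ℕ) × ℕ => univEval a.1.1 a.1.2 a.2 := by
  have hq : Primrec₂ fun (a : (List ℕ × List ℕ) × ℕ) (k : ℕ) => univQuery a.1.2 a.2 k :=
    Primrec₂.natPair.comp₂ (Primrec.encode.comp₂ (Primrec.list_take.comp₂ Primrec₂.right
      ((Primrec.snd.comp Primrec.fst).comp₂ Primrec₂.left))) (Primrec.snd.comp₂ Primrec₂.left)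
  have hr : Primrec₂ fun (a : (List ℕ × List ℕ) × ℕ) (k : ℕ) =>
      readGraph a.1.1 (univQuery a.1.2 a.2 k) :=
    primrec_readGraph.comp₂ ((Primrec.fst.comp Primrec.fst).comp₂ Primrec₂.left) hq
  have hp : Primrec₂ fun (a : (List ℕ × List ℕ) × ℕ) (k : ℕ) =>
      decide (readGraph a.1.1 (univQuery a.1.2 a.2 k) ≠ some none) :=
    (Primrec.eq.comp hr (Primrec.const (some none))).not.decide
  have hfind : Primrec fun a : (List ℕ × List ℕ) × ℕ => (List.range (a.1.2.length + 1)).find?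
      fun k => decide (readGraph a.1.1 (univQuery a.1.2 a.2 k) ≠ some none) :=
    primrec_list_find? (Primrec.list_range.comp
      (Primrec.succ.comp (Primrec.list_length.comp (Primrec.snd.comp Primrec.fst)))) hp
  have hjoin : Primrec₂ fun (a : (List ℕ × List ℕ) × ℕ) (k : ℕ) =>
      (readGraph a.1.1 (univQuery a.1.2 a.2 k)).join :=
    (Primrec.option_bind hr Primrec₂.right).of_eq fun _ => Option.bind_id_eq_join
  exact (Primrec.option_bind hfind hjoin).of_eq fun a => by rw [univEval]

namespace Functional

/-- On an oracle `h`, runs the functional whose graph is `h ∘ g₁` on the oracle `h ∘ g₂`. -/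
def univ (g₁ g₂ : ℕ → ℕ) (hg₁ : Primrec g₁) (hg₂ : Primrec g₂) : Functional where
  eval σ x := univEval (pullback g₁ σ) (pullback g₂ σ) x
  mono _ _ _ _ h := univEval_mono (pullback_prefix h) (pullback_prefix h)
  comp := (primrec_univEval.comp ((((primrec_pullback hg₁).comp Primrec.fst).pair
      ((primrec_pullback hg₂).comp Primrec.fst)).pair Primrec.snd)).to_comp

lemma univ_conv {g₁ g₂ : ℕ → ℕ} (hg₁ : Primrec g₁) (hg₂ : Primrec g₂) {Φ : Functional}
    {f h : ℕ → ℕ} {x y : ℕ} (hΦ : Φ.conv f x y) (h₁ : h ∘ g₁ = Φ.graph) (h₂ : h ∘ g₂ = f) :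
    (univ g₁ g₂ hg₁ hg₂).conv h x y := by
  obtain ⟨c, hc⟩ := univEval_initSeg_graph hΦ
  obtain ⟨K₁, hK₁⟩ := exists_le_pullbackLength g₁ c
  obtain ⟨K₂, hK₂⟩ := exists_le_pullbackLength g₂ c
  refine ⟨max K₁ K₂, ?_⟩
  show univEval (pullback g₁ _) (pullback g₂ _) x = some y
  rw [pullback_initSeg, pullback_initSeg, h₁, h₂]
  exact hc _ _ (hK₁ _ (by simp)) (hK₂ _ (by simp))

def toNatSeq (Φ : Functional) : Functional where
  eval σ x := if x = 0 then Φ.eval σ 0 else some 0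
  mono σ τ x y h := by
    split_ifs
    exacts [Φ.mono σ τ 0 y h, id]
  comp := (Computable.cond (Primrec.eq.comp Primrec.snd (Primrec.const 0)).decide.to_comp
    (Φ.comp.comp Computable.fst (Computable.const 0)) (Computable.const (some 0))).of_eq
    fun a => by by_cases h : a.2 = 0 <;> simp [h]

lemma toNatSeq_total {Φ : Functional} {h : ℕ → ℕ} {y : ℕ} (hΦ : Φ.conv h 0 y) :
    Φ.toNatSeq.Total h (natSeq y) := by
  rintro (_ | x)
  · simpa [conv, toNatSeq, natSeq] using hΦ
  · exact ⟨0, by simp [toNatSeq, natSeq]⟩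

def reindex (g : ℕ → ℕ) (hg : Computable g) : Functional where
  eval σ x := σ[g x]?
  mono _ _ _ _ h := h.getElem?_eq_some
  comp := Computable.list_getElem?.comp Computable.fst (hg.comp Computable.snd)

lemma reindex_total {g : ℕ → ℕ} (hg : Computable g) {h a : ℕ → ℕ} (ha : h ∘ g = a) :
    (reindex g hg).Total h a :=
  fun x => ⟨g x + 1, by rw [← ha]; exact initSeg_getElem? (Nat.lt_succ_self _)⟩

def const (c : ℕ → ℕ) (hc : Computable c) : Functional where
  eval _ x := some (c x)
  mono _ _ _ _ _ := id
  comp := Computable.option_some.comp (hc.comp Computable.snd)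

lemma const_total {c : ℕ → ℕ} (hc : Computable c) (h : ℕ → ℕ) : (const c hc).Total h c :=
  fun _ => ⟨0, rfl⟩

def pair (Φ Ψ : Functional) : Functional where
  eval σ x := if x % 2 = 0 then Φ.eval σ (x / 2) else Ψ.eval σ (x / 2)
  mono σ τ x y h := by
    split_ifs
    exacts [Φ.mono σ τ _ y h, Ψ.mono σ τ _ y h]
  comp := by
    have hdiv : Computable fun a : List ℕ × ℕ => a.2 / 2 :=
      (Primrec.nat_div.comp Primrec.snd (Primrec.const 2)).to_comp
    exact (Computable.cond (primrec_even.decide.comp Primrec.snd).to_comp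
      (Φ.comp.comp Computable.fst hdiv) (Ψ.comp.comp Computable.fst hdiv)).of_eq
      fun a => by by_cases h : a.2 % 2 = 0 <;> simp [h]

lemma pair_total {Φ Ψ : Functional} {h a b : ℕ → ℕ} (hΦ : Φ.Total h a) (hΨ : Ψ.Total h b) :
    (Φ.pair Ψ).Total h (join a b) := by
  intro x
  by_cases hx : x % 2 = 0
  · obtain ⟨k, hk⟩ := hΦ (x / 2)
    exact ⟨k, by simp [pair, join, hx, hk]⟩
  · obtain ⟨k, hk⟩ := hΨ (x / 2)
    exact ⟨k, by simp [pair, join, hx, hk]⟩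

end Functional

open Functional

lemma primrec_two_mul : Primrec fun n : ℕ => 2 * n :=
  Primrec.nat_mul.comp (Primrec.const 2) Primrec.id

lemma primrec_two_mul_add_one : Primrec fun n : ℕ => 2 * n + 1 :=
  Primrec.succ.comp primrec_two_mul

lemma FOPart_wRed (P : Problem) : WRed (FOPart P) P := by
  -- the index maps locate `Φ.graph` and `f` in `join f (join Φ.graph Ψ.graph)`, and
  -- `Ψ.graph` and `join f g` in `join (join f (join Φ.graph Ψ.graph)) g`
  refine ⟨univ (fun i => 2 * (2 * i) + 1) (fun i => 2 * i)
      (primrec_two_mul_add_one.comp primrec_two_mul) primrec_two_mul,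
    toNatSeq (univ (fun i => 2 * (2 * (2 * i + 1) + 1)) (join (fun i => 2 * (2 * i)) (2 * · + 1))
      (primrec_two_mul.comp (primrec_two_mul_add_one.comp primrec_two_mul_add_one))
      (primrec_join (primrec_two_mul.comp primrec_two_mul) primrec_two_mul_add_one)), ?_⟩
  rintro _ ⟨f, Φ, Ψ, rfl, p, hp, hpP, hsol⟩
  refine ⟨p, fun x => univ_conv _ _ (hp x) (by funext; simp) (by funext; simp), hpP,
    fun g hg => ?_⟩
  obtain ⟨y, hy⟩ := hsol g hg
  refine ⟨natSeq y, toNatSeq_total (univ_conv _ _ hy (by funext; simp) ?_),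
    f, Φ, Ψ, p, g, y, rfl, hp, hpP, hg, hy, rfl⟩
  rw [comp_join]
  congr 1 <;> funext <;> simp

lemma FOPart_firstOrder (P : Problem) : FirstOrder (FOPart P) := by
  rintro - - - ⟨-, -, -, -, -, y, -, -, -, -, -, rfl⟩
  exact ⟨y, rfl⟩

lemma FirstOrder.wRed_FOPart {P Q : Problem} (hQ : FirstOrder Q) (hQP : WRed Q P) :
    WRed Q (FOPart P) := by
  obtain ⟨Φ, Ψ, hred⟩ := hQP
  refine ⟨(reindex id Computable.id).pair
      (const (join Φ.graph Ψ.graph) (computable_join Φ.graph_computable Ψ.graph_computable)),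
    reindex (2 * · + 1) primrec_two_mul_add_one.to_comp, fun f hf => ?_⟩
  obtain ⟨p, hp, hpP, hsol⟩ := hred f hf
  refine ⟨_, pair_total (reindex_total _ (Function.comp_id f)) (const_total _ f),
    ⟨f, Φ, Ψ, rfl, p, hp, hpP, fun g hg => ?_⟩, ?_⟩
  · obtain ⟨w, hw, -⟩ := hsol g hg
    exact ⟨w 0, hw 0⟩
  rintro _ ⟨f', Φ', Ψ', p', g, y, heq, hp', -, hg, hy, rfl⟩
  obtain ⟨rfl, rfl, rfl⟩ : f = f' ∧ Φ = Φ' ∧ Ψ = Ψ' := by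
    simpa only [join_inj, graph_injective.eq_iff] using heq
  obtain rfl := total_unique hp hp'
  obtain ⟨w, hw, hwQ⟩ := hsol g hg
  obtain ⟨m, rfl⟩ := hQ f hf w hwQ
  obtain rfl : m = y := conv_unique (by simpa [natSeq] using hw 0) hy
  exact ⟨natSeq m, reindex_total _ (by funext; simp), hwQ⟩

theorem FOPart_is_max_first_order_below (P : Problem) :
    WRed (FOPart P) P ∧ FirstOrder (FOPart P) ∧
      ∀ Q : Problem, FirstOrder Q → WRed Q P → WRed Q (FOPart P) :=
  ⟨FOPart_wRed P, FOPart_firstOrder P, fun _ hQ hQP => hQ.wRed_FOPart hQP⟩
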